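/- arXiv:1907.04344 — 2 statements merged into one kernel-verified Lean document; each statement's English description precedes it below -/
import Mathlib

section
/- Let X be a Hausdorff space, κ an infinite cardinal, and suppose every point of X has a neighbourhood base of size ≤ κ (χ(X) ≤ κ). If every open cover of X has a subcover of size at most κ (L(X) ≤ κ), then |X| ≤ 2^κ. (Arhangel'skii's theorem, derived as a corollary of the pwL_c bound.) -/
/-!
This is the Pol–Šapirovskii closing-off argument. Since `χ(X) ≤ κ`, every point of `closure A`
already lies in the closure of some `E ⊆ A` with `|E| ≤ κ`, and in a Hausdorff space a point of
`closure E` is determined by the traces on `E` of its `≤ κ` basic neighbourhoods; so closures of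
sets of size `≤ 2^κ` again have size `≤ 2^κ`. A construction of length `κ⁺` then produces a closed
set `F` with `|F| ≤ 2^κ` that, for every family `𝒱` of at most `κ` basic sets at points of `F`
which does not cover `X`, contains a point outside `⋃ 𝒱`. If some `q` were outside `F`, the basic
sets at points of `F` avoiding `q`, together with `Fᶜ`, would cover `X`; by `L(X) ≤ κ` at most `κ`
of them cover `F`, and the point of `F` outside their union is a contradiction.
-/

open Set Cardinal Topology Filter

universe u

namespace Cardinal

theorem mk_iUnion_le_of_le {α ι : Type u} {f : ι → Set α} {μ : Cardinal.{u}} (hμ : ℵ₀ ≤ μ)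
    (hι : #ι ≤ μ) (hf : ∀ i, #(f i) ≤ μ) : #(⋃ i, f i) ≤ μ :=
  (mk_iUnion_le f).trans <| (mul_le_mul' hι (ciSup_le' hf)).trans_eq (mul_eq_self hμ)

theorem mk_bounded_subset_le_two_power {α : Type u} {s : Set α} {κ : Cardinal.{u}}
    (hκ : ℵ₀ ≤ κ) (hs : #s ≤ 2 ^ κ) : #{t : Set α // t ⊆ s ∧ #t ≤ κ} ≤ 2 ^ κ := by
  refine (mk_bounded_subset_le s κ).trans ?_
  calc max #s ℵ₀ ^ κ ≤ (2 ^ κ) ^ κ := power_le_power_right (max_le hs (hκ.trans (cantor κ).le))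
    _ = 2 ^ κ := by rw [← power_mul, mul_eq_self hκ]

end Cardinal

section ClosingOff

variable {α : Type u} (c : Set α → Set α)

noncomputable def closingStage : Ordinal.{u} → Set α :=
  wellFounded_lt.fix fun o stage => ⋃ (j) (h : j < o), (stage j h ∪ c (stage j h))

theorem closingStage_eq (o : Ordinal.{u}) :
    closingStage c o = ⋃ j < o, (closingStage c j ∪ c (closingStage c j)) :=
  wellFounded_lt.fix_eq _ o

theorem closingStage_union_subset {j o : Ordinal.{u}} (h : j < o) :
    closingStage c j ∪ c (closingStage c j) ⊆ closingStage c o := by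
  rw [closingStage_eq c o]
  exact subset_biUnion_of_mem (u := fun j => closingStage c j ∪ c (closingStage c j)) h

theorem mk_closingStage_le {μ : Cardinal.{u}} (hμ : ℵ₀ ≤ μ) (hc : ∀ S : Set α, #S ≤ μ → #(c S) ≤ μ)
    {o : Ordinal.{u}} (ho : o.card ≤ μ) : #(closingStage c o) ≤ μ := by
  induction o using WellFoundedLT.induction with
  | ind o IH =>
    rw [closingStage_eq]
    refine Cardinal.mk_biUnion_le_of_le ho hμ _ fun j hj => ?_
    have hj := IH j hj ((Ordinal.card_le_card hj.le).trans ho)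
    exact (mk_union_le _ _).trans ((add_le_add hj (hc _ hj)).trans_eq (add_eq_self hμ))

theorem exists_map_subset_self_mk_le {κ μ : Cardinal.{u}} (hκ : ℵ₀ ≤ κ) (hκμ : κ < μ)
    (hc_mono : Monotone c) (hc_small : ∀ S : Set α, ∀ x ∈ c S, ∃ E ⊆ S, #E ≤ κ ∧ x ∈ c E)
    (hc_card : ∀ S : Set α, #S ≤ μ → #(c S) ≤ μ) : ∃ F, c F ⊆ F ∧ #F ≤ μ := by
  set Λ := (Order.succ κ).ord
  have hΛ : Λ.card ≤ μ := by rw [card_ord]; exact Order.succ_le_of_lt hκμ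
  have hμ : ℵ₀ ≤ μ := hκ.trans hκμ.le
  refine ⟨⋃ o < Λ, closingStage c o, fun x hx => ?_, Cardinal.mk_biUnion_le_of_le hΛ hμ _
    fun o ho => mk_closingStage_le c hμ hc_card ((Ordinal.card_le_card ho.le).trans hΛ)⟩
  obtain ⟨E, hEF, hEκ, hxE⟩ := hc_small _ x hx
  choose o ho heo using fun e : E => mem_iUnion₂.1 (hEF e.2)
  -- `Λ` is regular, so the `≤ κ` stages that `E` meets are bounded below `Λ`
  have hβ : ⨆ e, o e + 1 < Λ := Ordinal.iSup_add_one_lt_of_lt_cof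
    (by rw [(isRegular_succ hκ).cof_ord]; exact hEκ.trans_lt (Order.lt_succ κ)) ho
  have hEβ : E ⊆ closingStage c (⨆ e, o e + 1) := fun e he =>
    closingStage_union_subset c ((Order.lt_add_one_iff.2 le_rfl).trans_le
      (Ordinal.le_iSup (fun e => o e + 1) ⟨e, he⟩)) (Or.inl (heo ⟨e, he⟩))
  exact mem_biUnion ((isSuccLimit_ord (hκ.trans (Order.le_succ κ))).succ_lt hβ)
    (closingStage_union_subset c (Order.lt_succ _) (Or.inr (hc_mono hEβ hxE)))

end ClosingOff

theorem mem_closure_inter_of_mem_nhds {X : Type*} [TopologicalSpace X] {s t : Set X} {x : X}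
    (hs : s ∈ 𝓝 x) (ht : x ∈ closure t) : x ∈ closure (s ∩ t) :=
  mem_closure_iff_nhds.2 fun u hu => by
    simpa only [inter_assoc] using mem_closure_iff_nhds.1 ht (u ∩ s) (inter_mem hu hs)

section LocalBase

variable {X : Type u} [TopologicalSpace X] {B : X → Set (Set X)} {κ : Cardinal.{u}}

theorem exists_subset_mk_le_mem_closure (hB : ∀ x, (𝓝 x).HasBasis (· ∈ B x) id)
    (hBκ : ∀ x, #(B x) ≤ κ) {A : Set X} {x : X} (hx : x ∈ closure A) :
    ∃ E ⊆ A, #E ≤ κ ∧ x ∈ closure E := by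
  choose p hpA hpU using fun U : B x => (mem_closure_iff_nhds_basis (hB x)).1 hx U U.2
  refine ⟨range p, range_subset_iff.2 hpA, mk_range_le.trans (hBκ x), ?_⟩
  exact (mem_closure_iff_nhds_basis (hB x)).2 fun U hU => ⟨_, mem_range_self ⟨U, hU⟩, hpU ⟨U, hU⟩⟩

theorem exists_mem_notMem_closure [T2Space X] (hB : ∀ x, (𝓝 x).HasBasis (· ∈ B x) id)
    {x y : X} (hxy : x ≠ y) : ∃ U ∈ B x, y ∉ closure U := by
  obtain ⟨U, hU, hUy⟩ := (hB x).disjoint_iff_left.1 (disjoint_nhds_nhds.2 hxy)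
  exact ⟨U, hU, fun hy => (mem_closure_iff_nhds.1 hy _ hUy).ne_empty (compl_inter_self U)⟩

theorem injOn_image_inter_closure [T2Space X] (hB : ∀ x, (𝓝 x).HasBasis (· ∈ B x) id)
    (E : Set X) : InjOn (fun x => (· ∩ E) '' B x) (closure E) := by
  intro x hx y hy hxy
  by_contra hne
  obtain ⟨U, hU, hyU⟩ := exists_mem_notMem_closure hB hne
  obtain ⟨V, hV, hVU⟩ : U ∩ E ∈ (· ∩ E) '' B y :=
    congrArg (U ∩ E ∈ ·) hxy ▸ mem_image_of_mem _ hU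
  have hyV : y ∈ closure (V ∩ E) := mem_closure_inter_of_mem_nhds ((hB y).mem_of_mem hV) hy
  rw [show V ∩ E = U ∩ E from hVU] at hyV
  exact hyU (closure_mono inter_subset_left hyV)

theorem mk_closure_le_two_power_of_mk_le [T2Space X] (hκ : ℵ₀ ≤ κ)
    (hB : ∀ x, (𝓝 x).HasBasis (· ∈ B x) id) (hBκ : ∀ x, #(B x) ≤ κ) {E : Set X}
    (hE : #E ≤ κ) : #(closure E) ≤ 2 ^ κ := by
  rw [← mk_image_eq_of_injOn _ _ (injOn_image_inter_closure hB E)]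
  have hPE : #(𝒫 E) ≤ 2 ^ κ := (mk_powerset E).trans_le (power_le_power_left two_ne_zero hE)
  refine (mk_le_mk_of_subset (t := {t | t ⊆ 𝒫 E ∧ #t ≤ κ}) ?_).trans
    (mk_bounded_subset_le_two_power hκ hPE)
  rintro - ⟨x, -, rfl⟩
  exact ⟨image_subset_iff.2 fun U _ => inter_subset_right, mk_image_le.trans (hBκ x)⟩

theorem mk_closure_le_two_power [T2Space X] (hκ : ℵ₀ ≤ κ)
    (hB : ∀ x, (𝓝 x).HasBasis (· ∈ B x) id) (hBκ : ∀ x, #(B x) ≤ κ) {A : Set X}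
    (hA : #A ≤ 2 ^ κ) : #(closure A) ≤ 2 ^ κ := by
  have hcover : closure A ⊆ ⋃ E : {E : Set X // E ⊆ A ∧ #E ≤ κ}, closure E.1 := fun x hx =>
    let ⟨E, hEA, hEκ, hxE⟩ := exists_subset_mk_le_mem_closure hB hBκ hx
    mem_iUnion.2 ⟨⟨E, hEA, hEκ⟩, hxE⟩
  exact (mk_le_mk_of_subset hcover).trans <| mk_iUnion_le_of_le (hκ.trans (cantor κ).le)
    (mk_bounded_subset_le_two_power hκ hA) fun E => mk_closure_le_two_power_of_mk_le hκ hB hBκ E.2.2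

end LocalBase

section EscapePoints

variable {X : Type u} [Nonempty X] {B : X → Set (Set X)} {κ : Cardinal.{u}}

variable (B κ) in
-- `Classical.epsilon` picks a point outside `⋃₀ 𝒱` whenever there is one.
noncomputable def escapePoints (S : Set X) : Set X :=
  (fun 𝒱 : Set (Set X) => Classical.epsilon fun z => z ∉ ⋃₀ 𝒱) ''
    {𝒱 | 𝒱 ⊆ ⋃ x ∈ S, B x ∧ #𝒱 ≤ κ}

theorem escapePoints_mono : Monotone (escapePoints B κ) := by
  rintro S T hST - ⟨𝒱, ⟨h𝒱S, h𝒱κ⟩, rfl⟩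
  exact ⟨𝒱, ⟨h𝒱S.trans (biUnion_subset_biUnion_left hST), h𝒱κ⟩, rfl⟩

theorem exists_subset_mk_le_mem_escapePoints {S : Set X} {y : X}
    (hy : y ∈ escapePoints B κ S) : ∃ E ⊆ S, #E ≤ κ ∧ y ∈ escapePoints B κ E := by
  obtain ⟨𝒱, ⟨h𝒱S, h𝒱κ⟩, rfl⟩ := hy
  choose x hxS hVx using fun V : 𝒱 => mem_iUnion₂.1 (h𝒱S V.2)
  refine ⟨range x, range_subset_iff.2 hxS, mk_range_le.trans h𝒱κ, 𝒱, ⟨fun V hV => ?_, h𝒱κ⟩, rfl⟩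
  exact mem_iUnion₂.2 ⟨_, mem_range_self ⟨V, hV⟩, hVx ⟨V, hV⟩⟩

theorem mk_escapePoints_le (hκ : ℵ₀ ≤ κ) (hBκ : ∀ x, #(B x) ≤ κ) {S : Set X}
    (hS : #S ≤ 2 ^ κ) : #(escapePoints B κ S) ≤ 2 ^ κ := by
  refine mk_image_le.trans (mk_bounded_subset_le_two_power hκ ?_)
  rw [biUnion_eq_iUnion]
  exact mk_iUnion_le_of_le (hκ.trans (cantor κ).le) hS fun x => (hBκ x).trans (cantor κ).le

theorem eq_univ_of_escapePoints_subset [TopologicalSpace X] [T1Space X]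
    (hB : ∀ x, (𝓝 x).HasBasis (· ∈ B x) id) (hBo : ∀ x, ∀ U ∈ B x, IsOpen U)
    (hL : ∀ 𝒰 : Set (Set X), (∀ U ∈ 𝒰, IsOpen U) → ⋃₀ 𝒰 = Set.univ →
      ∃ 𝒱 ⊆ 𝒰, #𝒱 ≤ κ ∧ ⋃₀ 𝒱 = Set.univ)
    {F : Set X} (hF : IsClosed F) (hFesc : escapePoints B κ F ⊆ F) : F = Set.univ := by
  refine eq_univ_of_forall fun q => by_contra fun hq => ?_
  choose! U hUB hqU using fun x (hx : x ∈ F) =>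
    (hB x).mem_iff.1 (isOpen_compl_singleton.mem_nhds (ne_of_mem_of_not_mem hx hq))
  have hcover : ⋃₀ insert Fᶜ (U '' F) = Set.univ := eq_univ_of_forall fun y => by
    by_cases hy : y ∈ F
    · exact ⟨U y, Or.inr ⟨y, hy, rfl⟩, (hB y).mem_of_mem (hUB y hy) |> mem_of_mem_nhds⟩
    · exact ⟨Fᶜ, Or.inl rfl, hy⟩
  obtain ⟨𝒱, h𝒱, h𝒱κ, h𝒱univ⟩ := hL _ (by
    rintro _ (rfl | ⟨x, hx, rfl⟩)
    exacts [hF.isOpen_compl, hBo x _ (hUB x hx)]) hcover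
  set 𝒲 := 𝒱 ∩ U '' F
  have hF𝒲 : F ⊆ ⋃₀ 𝒲 := fun y hy => by
    obtain ⟨V, hV𝒱, hyV⟩ := h𝒱univ.symm ▸ mem_univ y
    rcases h𝒱 hV𝒱 with rfl | hVU
    exacts [absurd hy hyV, ⟨V, ⟨hV𝒱, hVU⟩, hyV⟩]
  have hq𝒲 : q ∉ ⋃₀ 𝒲 := by
    rintro ⟨-, ⟨-, x, hx, rfl⟩, hqU'⟩
    exact hqU x hx hqU' rfl
  have h𝒲F : 𝒲 ⊆ ⋃ x ∈ F, B x := by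
    rintro - ⟨-, x, hx, rfl⟩
    exact mem_biUnion hx (hUB x hx)
  exact Classical.epsilon_spec (p := fun z => z ∉ ⋃₀ 𝒲) ⟨q, hq𝒲⟩
    (hF𝒲 (hFesc ⟨𝒲, ⟨h𝒲F, (mk_le_mk_of_subset inter_subset_left).trans h𝒱κ⟩, rfl⟩))

end EscapePoints

theorem exists_isClosed_escapePoints_subset_mk_le {X : Type u} [TopologicalSpace X] [T2Space X]
    [Nonempty X] {B : X → Set (Set X)} {κ : Cardinal.{u}} (hκ : ℵ₀ ≤ κ)
    (hB : ∀ x, (𝓝 x).HasBasis (· ∈ B x) id) (hBκ : ∀ x, #(B x) ≤ κ) :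
    ∃ F : Set X, IsClosed F ∧ escapePoints B κ F ⊆ F ∧ #F ≤ 2 ^ κ := by
  obtain ⟨F, hF, hFκ⟩ := exists_map_subset_self_mk_le (fun S => closure S ∪ escapePoints B κ S)
    hκ (cantor κ) (fun S T h => union_subset_union (closure_mono h) (escapePoints_mono h))
    (by
      rintro S x (hx | hx)
      · obtain ⟨E, hES, hEκ, hxE⟩ := exists_subset_mk_le_mem_closure hB hBκ hx
        exact ⟨E, hES, hEκ, Or.inl hxE⟩
      · obtain ⟨E, hES, hEκ, hxE⟩ := exists_subset_mk_le_mem_escapePoints hx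
        exact ⟨E, hES, hEκ, Or.inr hxE⟩)
    fun S hS => (mk_union_le _ _).trans <| (add_le_add (mk_closure_le_two_power hκ hB hBκ hS)
      (mk_escapePoints_le hκ hBκ hS)).trans_eq (add_eq_self (hκ.trans (cantor κ).le))
  exact ⟨F, closure_subset_iff_isClosed.1 (subset_union_left.trans hF),
    subset_union_right.trans hF, hFκ⟩

/-- Arhangel'skii: if `X` is Hausdorff, then `|X| ≤ 2 ^ (L(X) ⬝ χ(X))`. -/
theorem arhangelskii {X : Type u} [TopologicalSpace X] [T2Space X]
    (κ : Cardinal.{u}) (hκ : ℵ₀ ≤ κ)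
    (hχ : ∀ x : X, ∃ B : Set (Set X), #B ≤ κ ∧
      (∀ U ∈ B, IsOpen U ∧ x ∈ U) ∧ ∀ V : Set X, IsOpen V → x ∈ V → ∃ U ∈ B, U ⊆ V)
    (hL : ∀ 𝒰 : Set (Set X), (∀ U ∈ 𝒰, IsOpen U) → ⋃₀ 𝒰 = Set.univ →
      ∃ 𝒱 ⊆ 𝒰, #𝒱 ≤ κ ∧ ⋃₀ 𝒱 = Set.univ) :
    #X ≤ 2 ^ κ := by
  rcases isEmpty_or_nonempty X with hX | hX
  · simp
  choose B hBκ hB using hχ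
  have hBo : ∀ x, ∀ U ∈ B x, IsOpen U := fun x U hU => ((hB x).1 U hU).1
  have hBnhds : ∀ x, (𝓝 x).HasBasis (· ∈ B x) id := fun x =>
    (nhds_basis_opens x).to_hasBasis (fun V ⟨hxV, hV⟩ => (hB x).2 V hV hxV)
      fun U hU => ⟨U, ((hB x).1 U hU).symm, subset_rfl⟩
  obtain ⟨F, hF, hFesc, hFκ⟩ := exists_isClosed_escapePoints_subset_mk_le hκ hBnhds hBκ
  rw [← mk_univ, ← eq_univ_of_escapePoints_subset hBnhds hBo hL hF hFesc]
  exact hFκ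
end

section
/- Let X be an initially κ-compact Hausdorff space such that wL_c(X) ≤ κ, t(X) ≤ κ, ψ_c(X) ≤ κ, and X has a dense set of points of character at most κ. Then |X| ≤ 2^κ. (Alas's theorem, derived from the main theorem and the initial-κ-compactness lemma.) -/
open Set Cardinal

universe u

/-!
Initial κ-compactness turns a closed pseudobase of size `≤ κ` at a point into a regular local
base of size `≤ κ` (finite intersections of the pseudobase), so `χ(X) ≤ κ`. A closed pseudobase
of size `≤ κ` also bounds the closure of a set of size `≤ κ` by `2 ^ κ`: a point of the closure
is determined by the traces of its pseudobase on the set.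

Close off a set `H` of size `≤ 2 ^ κ` under closures of its `≤ κ`-sized subsets and, for every
`≤ κ`-sized family `𝒱` of basic neighbourhoods of its points, under picking a point outside
`closure (⋃₀ 𝒱)` when there is one. By tightness `H` is closed. If some `z ∉ H`, a regular
basic neighbourhood `C` of `z` has closure missing `H`, and `wL_c(X) ≤ κ` gives a `≤ κ`-sized
family `𝒲` of basic neighbourhoods of points of `H`, all disjoint from `C`, with
`H ⊆ closure (⋃₀ 𝒲)`. Then `z ∉ closure (⋃₀ 𝒲)`, so the point picked for `𝒲` lies in `H` but
outside `closure (⋃₀ 𝒲)`.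
-/

namespace Cardinal

variable {α : Type u} {κ μ : Cardinal.{u}}

theorem mk_finset_le_of_mk_le (hκ : ℵ₀ ≤ κ) (h : #α ≤ κ) : #(Finset α) ≤ κ := by
  rcases finite_or_infinite α with hα | hα
  · exact mk_le_aleph0.trans hκ
  · rwa [mk_finset_of_infinite]

theorem two_power_power_self (hκ : ℵ₀ ≤ κ) : ((2 : Cardinal) ^ κ) ^ κ = 2 ^ κ := by
  rw [← power_mul, mul_eq_self hκ]

theorem mk_biUnion_le_of_forall_le {ι : Type u} {A : ι → Set α} {s : Set ι} (hμ : ℵ₀ ≤ μ)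
    (hs : #s ≤ μ) (hA : ∀ i ∈ s, #(A i) ≤ μ) : #(⋃ i ∈ s, A i) ≤ μ :=
  (mk_biUnion_le A s).trans <|
    (mul_le_mul' hs (ciSup_le' fun i => hA _ i.2)).trans (mul_eq_self hμ).le

theorem mk_setOf_subset_mk_le_le {s : Set α} (hs : #s ≤ μ) (hμ : ℵ₀ ≤ μ) :
    #{t | t ⊆ s ∧ #t ≤ κ} ≤ μ ^ κ :=
  (mk_bounded_subset_le s κ).trans (power_le_power_right (max_le hs hμ))

/-- The closing-off argument: iterate `B ↦ ⋃ {Φ S | S ⊆ B, #S ≤ κ}` along `(succ κ).ord`;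
by regularity of `succ κ` every `κ`-sized subset of the union appears at a bounded stage. -/
theorem exists_closedUnder_small_subsets (hκ : ℵ₀ ≤ κ) (hκμ : κ < μ) (hμ : μ ^ κ = μ)
    (Φ : Set α → Set α) (hΦ : ∀ S : Set α, #S ≤ κ → #(Φ S) ≤ μ) :
    ∃ H : Set α, #H ≤ μ ∧ ∀ S ⊆ H, #S ≤ κ → Φ S ⊆ H := by
  have hμ₀ : ℵ₀ ≤ μ := hκ.trans hκμ.le
  let step : Set α → Set α := fun B => ⋃ S ∈ {S | S ⊆ B ∧ #S ≤ κ}, Φ S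
  have hstep : ∀ B : Set α, #B ≤ μ → #(step B) ≤ μ := fun B hB =>
    mk_biUnion_le_of_forall_le hμ₀ (hμ ▸ mk_setOf_subset_mk_le_le hB hμ₀) fun S hS => hΦ S hS.2
  obtain ⟨A, hA⟩ : ∃ A : Ordinal.{u} → Set α, ∀ β, A β = ⋃ γ < β, step (A γ) :=
    ⟨_, Ordinal.lt_wf.fix_eq fun β ih => ⋃ γ, ⋃ h : γ < β, step (ih γ h)⟩
  have hmono : ∀ {γ β : Ordinal}, γ < β → step (A γ) ⊆ A β := fun {γ β} h => by
    rw [hA β]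
    exact subset_biUnion_of_mem (u := fun γ => step (A γ)) h
  set o := (Order.succ κ).ord
  have hA_card : ∀ β ≤ o, #(A β) ≤ μ := by
    intro β
    induction β using WellFoundedLT.induction with
    | _ β ih =>
      intro hβ
      rw [hA]
      refine mk_biUnion_le_of_le ?_ hμ₀ _ fun γ hγ => hstep _ (ih γ hγ (hγ.le.trans hβ))
      exact (Ordinal.card_le_card hβ).trans ((card_ord _).trans_le (Order.succ_le_of_lt hκμ))
  refine ⟨A o, hA_card o le_rfl, fun S hS hSκ => ?_⟩
  have hstage : ∀ s : S, ∃ γ < o, (s : α) ∈ step (A γ) := fun s => by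
    simpa only [hA o, mem_iUnion, exists_prop] using hS s.2
  choose g hgo hg using hstage
  have hbound : ⨆ s, g s + 1 < o := by
    refine Ordinal.iSup_add_one_lt_of_lt_cof ?_ hgo
    rw [(isRegular_succ hκ).cof_ord]
    exact hSκ.trans_lt (Order.lt_succ κ)
  have hSA : S ⊆ A (⨆ s, g s + 1) := fun s hs =>
    hmono ((lt_add_one _).trans_le (Ordinal.le_iSup (fun s => g s + 1) ⟨s, hs⟩)) (hg ⟨s, hs⟩)
  exact (subset_biUnion_of_mem (s := {S | S ⊆ A _ ∧ #S ≤ κ}) (u := Φ) ⟨hSA, hSκ⟩).trans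
    (hmono hbound)

end Cardinal

section

variable {X : Type u} [TopologicalSpace X] {κ : Cardinal.{u}}

theorem exists_finset_biInter_subset_of_initiallyCompact (hκ : ℵ₀ ≤ κ)
    (hinit : ∀ 𝒰 : Set (Set X), (∀ U ∈ 𝒰, IsOpen U) → ⋃₀ 𝒰 = Set.univ →
      #𝒰 ≤ κ → ∃ t ⊆ 𝒰, t.Finite ∧ ⋃₀ t = Set.univ)
    {ι : Type u} (hι : #ι ≤ κ) {F : ι → Set X} (hF : ∀ i, IsClosed (F i)) {V : Set X}
    (hV : IsOpen V) (hFV : ⋂ i, F i ⊆ V) : ∃ s : Finset ι, ⋂ i ∈ s, F i ⊆ V := by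
  set 𝒞 := insert V (range fun i => (F i)ᶜ)
  have h𝒞open : ∀ W ∈ 𝒞, IsOpen W := by
    rintro W (rfl | ⟨i, rfl⟩)
    exacts [hV, (hF i).isOpen_compl]
  have h𝒞cover : ⋃₀ 𝒞 = Set.univ := by
    refine eq_univ_of_forall fun y => ?_
    by_cases hy : y ∈ ⋂ i, F i
    · exact ⟨V, mem_insert _ _, hFV hy⟩
    · obtain ⟨i, hi⟩ := by simpa only [mem_iInter, not_forall] using hy
      exact ⟨(F i)ᶜ, mem_insert_of_mem _ ⟨i, rfl⟩, hi⟩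
  have h𝒞κ : #𝒞 ≤ κ :=
    mk_insert_le.trans ((add_le_add_left (mk_range_le.trans hι) 1).trans (add_one_eq hκ).le)
  obtain ⟨t, ht𝒞, htfin, htcover⟩ := hinit 𝒞 h𝒞open h𝒞cover h𝒞κ
  have htV : t \ {V} ⊆ (fun i => (F i)ᶜ) '' univ := by
    rw [image_univ, sdiff_subset_iff, singleton_union]
    exact ht𝒞
  obtain ⟨u, -, hufin, hu⟩ := exists_subset_image_finite_and.1 ⟨_, htV, htfin.sdiff, rfl⟩
  refine ⟨hufin.toFinset, fun y hy => ?_⟩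
  by_contra hyV
  obtain ⟨W, hWt, hyW⟩ := htcover.symm ▸ mem_univ y
  obtain ⟨i, hiu, rfl⟩ : W ∈ (fun i => (F i)ᶜ) '' u := hu ▸ ⟨hWt, fun h => hyV (h ▸ hyW)⟩
  exact hyW (mem_iInter₂.1 hy i (hufin.mem_toFinset.2 hiu))

theorem exists_regular_local_base_of_initiallyCompact (hκ : ℵ₀ ≤ κ)
    (hinit : ∀ 𝒰 : Set (Set X), (∀ U ∈ 𝒰, IsOpen U) → ⋃₀ 𝒰 = Set.univ →
      #𝒰 ≤ κ → ∃ t ⊆ 𝒰, t.Finite ∧ ⋃₀ t = Set.univ)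
    {x : X} {𝒰 : Set (Set X)} (h𝒰κ : #𝒰 ≤ κ) (h𝒰 : ∀ U ∈ 𝒰, IsOpen U ∧ x ∈ U)
    (h𝒰x : ⋂ U ∈ 𝒰, closure U = {x}) :
    ∃ B : Set (Set X), #B ≤ κ ∧ (∀ b ∈ B, IsOpen b ∧ x ∈ b) ∧
      ∀ V, IsOpen V → x ∈ V → ∃ b ∈ B, closure b ⊆ V := by
  refine ⟨range fun s : Finset 𝒰 => ⋂ U ∈ s, (U : Set X),
    mk_range_le.trans (mk_finset_le_of_mk_le hκ h𝒰κ), ?_, fun V hV hxV => ?_⟩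
  · rintro b ⟨s, rfl⟩
    exact ⟨isOpen_biInter_finset fun U _ => (h𝒰 U U.2).1,
      mem_iInter₂.2 fun U _ => (h𝒰 U U.2).2⟩
  · have hV' : ⋂ U : 𝒰, closure (U : Set X) ⊆ V := fun y hy => by
      have : y ∈ ⋂ U ∈ 𝒰, closure U := mem_iInter₂.2 fun U hU => mem_iInter.1 hy ⟨U, hU⟩
      rw [h𝒰x] at this
      exact this ▸ hxV
    obtain ⟨s, hs⟩ := exists_finset_biInter_subset_of_initiallyCompact hκ hinit h𝒰κ
      (fun _ => isClosed_closure) hV hV'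
    have hclosure : closure (⋂ U ∈ s, (U : Set X)) ⊆ ⋂ U ∈ s, closure (U : Set X) :=
      closure_minimal (iInter₂_mono fun _ _ => subset_closure)
        (isClosed_biInter fun _ _ => isClosed_closure)
    exact ⟨_, ⟨s, rfl⟩, hclosure.trans hs⟩

theorem mk_closure_le_two_power_s16 (hκ : ℵ₀ ≤ κ)
    (hψ : ∀ x : X, ∃ 𝒰 : Set (Set X), #𝒰 ≤ κ ∧ (∀ U ∈ 𝒰, IsOpen U ∧ x ∈ U) ∧
      (⋂ U ∈ 𝒰, closure U) = {x})
    {S : Set X} (hS : #S ≤ κ) : #(closure S) ≤ 2 ^ κ := by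
  choose 𝒰 h𝒰κ h𝒰 h𝒰x using hψ
  let trace : closure S → {T : Set (Set X) | T ⊆ 𝒫 S ∧ #T ≤ κ} := fun y =>
    ⟨(S ∩ ·) '' 𝒰 y, image_subset_iff.2 fun _ _ => inter_subset_left,
      mk_image_le.trans (h𝒰κ y)⟩
  have htrace : Function.Injective trace := by
    rintro ⟨y, hy⟩ ⟨y', hy'⟩ h
    have h' : (S ∩ ·) '' 𝒰 y = (S ∩ ·) '' 𝒰 y' := congrArg Subtype.val h
    have hy'U : ∀ U ∈ 𝒰 y, y' ∈ closure U := fun U hU => by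
      have hU' : S ∩ U ∈ (S ∩ ·) '' 𝒰 y' := h' ▸ mem_image_of_mem _ hU
      obtain ⟨U', hU', hUU'⟩ := hU'
      have := (h𝒰 y' U' hU').1.closure_inter ⟨hy', (h𝒰 y' U' hU').2⟩
      exact closure_mono inter_subset_right ((show S ∩ U' = S ∩ U from hUU') ▸ this)
    have := mem_iInter₂.2 hy'U
    rw [h𝒰x] at this
    exact Subtype.ext this.symm
  calc #(closure S) ≤ #{T : Set (Set X) | T ⊆ 𝒫 S ∧ #T ≤ κ} := mk_le_of_injective htrace
    _ ≤ (2 ^ κ) ^ κ := by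
      refine mk_setOf_subset_mk_le_le ?_ (hκ.trans (cantor κ).le)
      rw [mk_powerset]
      exact power_le_power_left two_ne_zero hS
    _ = 2 ^ κ := two_power_power_self hκ

theorem isClosed_of_forall_small_closure_subset
    (ht : ∀ (A : Set X) (x : X), x ∈ closure A → ∃ S ⊆ A, #S ≤ κ ∧ x ∈ closure S)
    {H : Set X} (hH : ∀ S ⊆ H, #S ≤ κ → closure S ⊆ H) : IsClosed H := by
  refine closure_subset_iff_isClosed.1 fun x hx => ?_
  obtain ⟨S, hSH, hSκ, hxS⟩ := ht H x hx
  exact hH S hSH hSκ hxS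

theorem exists_subset_mk_le_subset_biUnion {α β : Type u} {f : α → Set β} {H : Set α}
    {T : Set β} (hT : T ⊆ ⋃ x ∈ H, f x) : ∃ S ⊆ H, #S ≤ #T ∧ T ⊆ ⋃ x ∈ S, f x := by
  have hT' : ∀ t : T, ∃ x ∈ H, (t : β) ∈ f x := fun t => by
    simpa only [mem_iUnion₂, exists_prop] using hT t.2
  choose g hgH hg using hT'
  exact ⟨range g, range_subset_iff.2 hgH, mk_range_le,
    fun t ht => mem_biUnion (mem_range_self ⟨t, ht⟩) (hg ⟨t, ht⟩)⟩

theorem exists_small_family_closure_sUnion_separating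
    (hwLc : ∀ F : Set X, IsClosed F → ∀ 𝒲 : Set (Set X), (∀ W ∈ 𝒲, IsOpen W) →
      F ⊆ ⋃₀ 𝒲 → ∃ 𝒲' ⊆ 𝒲, #𝒲' ≤ κ ∧ F ⊆ closure (⋃₀ 𝒲'))
    {B : X → Set (Set X)} (hB : ∀ x, ∀ b ∈ B x, IsOpen b ∧ x ∈ b)
    (hBreg : ∀ x V, IsOpen V → x ∈ V → ∃ b ∈ B x, closure b ⊆ V)
    {H : Set X} (hH : IsClosed H) {z : X} (hz : z ∉ H) :
    ∃ 𝒲 ⊆ ⋃ x ∈ H, B x, #𝒲 ≤ κ ∧ H ⊆ closure (⋃₀ 𝒲) ∧ z ∉ closure (⋃₀ 𝒲) := by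
  obtain ⟨C, hCz, hCH⟩ := hBreg z Hᶜ hH.isOpen_compl hz
  obtain ⟨hCopen, hzC⟩ := hB z C hCz
  have hcover : H ⊆ ⋃₀ {b ∈ ⋃ x ∈ H, B x | Disjoint b C} := fun x hx => by
    obtain ⟨b, hbx, hbC⟩ :=
      hBreg x (closure C)ᶜ isClosed_closure.isOpen_compl fun h => hCH h hx
    refine ⟨b, ⟨mem_biUnion hx hbx, ?_⟩, (hB x b hbx).2⟩
    exact subset_compl_iff_disjoint_right.1
      (subset_closure.trans (hbC.trans (compl_subset_compl.2 subset_closure)))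
  have hopen : ∀ b ∈ {b ∈ ⋃ x ∈ H, B x | Disjoint b C}, IsOpen b := fun b hb => by
    obtain ⟨x, -, hbx⟩ := mem_iUnion₂.1 hb.1
    exact (hB x b hbx).1
  obtain ⟨𝒲, h𝒲, h𝒲κ, hH𝒲⟩ := hwLc H hH _ hopen hcover
  refine ⟨𝒲, fun b hb => (h𝒲 hb).1, h𝒲κ, hH𝒲, fun hz𝒲 => ?_⟩
  have hC𝒲 : Disjoint C (⋃₀ 𝒲) := disjoint_sUnion_right.2 fun b hb => (h𝒲 hb).2.symm
  exact (hC𝒲.closure_right hCopen).notMem_of_mem_left hzC hz𝒲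

theorem mk_le_two_power_of_regular_local_bases (hκ : ℵ₀ ≤ κ)
    (hψ : ∀ x : X, ∃ 𝒰 : Set (Set X), #𝒰 ≤ κ ∧ (∀ U ∈ 𝒰, IsOpen U ∧ x ∈ U) ∧
      (⋂ U ∈ 𝒰, closure U) = {x})
    (hχ : ∀ x : X, ∃ B : Set (Set X), #B ≤ κ ∧ (∀ b ∈ B, IsOpen b ∧ x ∈ b) ∧
      ∀ V, IsOpen V → x ∈ V → ∃ b ∈ B, closure b ⊆ V)
    (hwLc : ∀ F : Set X, IsClosed F → ∀ 𝒲 : Set (Set X), (∀ W ∈ 𝒲, IsOpen W) →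
      F ⊆ ⋃₀ 𝒲 → ∃ 𝒲' ⊆ 𝒲, #𝒲' ≤ κ ∧ F ⊆ closure (⋃₀ 𝒲'))
    (ht : ∀ (A : Set X) (x : X), x ∈ closure A → ∃ S ⊆ A, #S ≤ κ ∧ x ∈ closure S) :
    #X ≤ 2 ^ κ := by
  rcases isEmpty_or_nonempty X with _ | _
  · simp
  choose B hBκ hB hBreg using hχ
  choose! w hw using fun 𝒱 : Set (Set X) => fun h : (closure (⋃₀ 𝒱))ᶜ.Nonempty => h
  let Φ : Set X → Set X := fun S => closure S ∪ w '' {𝒱 | 𝒱 ⊆ ⋃ x ∈ S, B x ∧ #𝒱 ≤ κ}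
  have hΦ : ∀ S : Set X, #S ≤ κ → #(Φ S) ≤ 2 ^ κ := fun S hS => by
    have hpool : #{𝒱 | 𝒱 ⊆ ⋃ x ∈ S, B x ∧ #𝒱 ≤ κ} ≤ 2 ^ κ :=
      power_self_eq hκ ▸ mk_setOf_subset_mk_le_le
        (mk_biUnion_le_of_forall_le hκ hS fun x _ => hBκ x) hκ
    exact (mk_union_le _ _).trans <| (add_le_add (mk_closure_le_two_power_s16 hκ hψ hS)
      (mk_image_le.trans hpool)).trans (add_eq_self (hκ.trans (cantor κ).le)).le
  obtain ⟨H, hHκ, hH⟩ :=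
    exists_closedUnder_small_subsets hκ (cantor κ) (two_power_power_self hκ) Φ hΦ
  have hHclosed : IsClosed H := isClosed_of_forall_small_closure_subset ht
    fun S hSH hSκ => subset_union_left.trans (hH S hSH hSκ)
  suffices H = Set.univ by rwa [this, mk_univ] at hHκ
  refine eq_univ_of_forall fun z => by_contra fun hz => ?_
  obtain ⟨𝒲, h𝒲B, h𝒲κ, hH𝒲, hz𝒲⟩ :=
    exists_small_family_closure_sUnion_separating hwLc hB hBreg hHclosed hz
  obtain ⟨S, hSH, hSκ, h𝒲S⟩ := exists_subset_mk_le_subset_biUnion h𝒲B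
  have hw𝒲 : w 𝒲 ∈ H :=
    hH S hSH (hSκ.trans h𝒲κ) (Or.inr ⟨𝒲, ⟨h𝒲S, h𝒲κ⟩, rfl⟩)
  exact hw 𝒲 ⟨z, hz𝒲⟩ (hH𝒲 hw𝒲)

end

theorem alas_general {X : Type u} [TopologicalSpace X]
    (κ : Cardinal.{u}) (hκ : ℵ₀ ≤ κ)
    (hinit : ∀ 𝒰 : Set (Set X), (∀ U ∈ 𝒰, IsOpen U) → ⋃₀ 𝒰 = Set.univ →
      #𝒰 ≤ κ → ∃ t ⊆ 𝒰, t.Finite ∧ ⋃₀ t = Set.univ)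
    (hwLc : ∀ F : Set X, IsClosed F → ∀ 𝒲 : Set (Set X), (∀ W ∈ 𝒲, IsOpen W) →
      F ⊆ ⋃₀ 𝒲 → ∃ 𝒲' ⊆ 𝒲, #𝒲' ≤ κ ∧ F ⊆ closure (⋃₀ 𝒲'))
    (ht : ∀ (A : Set X) (x : X), x ∈ closure A → ∃ S ⊆ A, #S ≤ κ ∧ x ∈ closure S)
    (hψ : ∀ x : X, ∃ 𝒰 : Set (Set X), #𝒰 ≤ κ ∧ (∀ U ∈ 𝒰, IsOpen U ∧ x ∈ U) ∧
      (⋂ U ∈ 𝒰, closure U) = {x}) :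
    #X ≤ 2 ^ κ := by
  refine mk_le_two_power_of_regular_local_bases hκ hψ (fun x => ?_) hwLc ht
  obtain ⟨𝒰, h𝒰κ, h𝒰, h𝒰x⟩ := hψ x
  exact exists_regular_local_base_of_initiallyCompact hκ hinit h𝒰κ h𝒰 h𝒰x

/-- Alas's theorem: an initially κ-compact Hausdorff space with `wL_c(X) ≤ κ`,
`t(X) ≤ κ`, `ψ_c(X) ≤ κ` and a dense set of points of character `≤ κ` has
cardinality at most `2 ^ κ`. -/
theorem alas {X : Type u} [TopologicalSpace X] [T2Space X]
    (κ : Cardinal.{u}) (hκ : ℵ₀ ≤ κ)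
    (hinit : ∀ 𝒰 : Set (Set X), (∀ U ∈ 𝒰, IsOpen U) → ⋃₀ 𝒰 = Set.univ →
      #𝒰 ≤ κ → ∃ t ⊆ 𝒰, t.Finite ∧ ⋃₀ t = Set.univ)
    (hwLc : ∀ F : Set X, IsClosed F → ∀ 𝒲 : Set (Set X), (∀ W ∈ 𝒲, IsOpen W) →
      F ⊆ ⋃₀ 𝒲 → ∃ 𝒲' ⊆ 𝒲, #𝒲' ≤ κ ∧ F ⊆ closure (⋃₀ 𝒲'))
    (ht : ∀ (A : Set X) (x : X), x ∈ closure A → ∃ S ⊆ A, #S ≤ κ ∧ x ∈ closure S)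
    (hψ : ∀ x : X, ∃ 𝒰 : Set (Set X), #𝒰 ≤ κ ∧ (∀ U ∈ 𝒰, IsOpen U ∧ x ∈ U) ∧
      (⋂ U ∈ 𝒰, closure U) = {x})
    (hdense : ∃ D : Set X, Dense D ∧ ∀ x ∈ D, ∃ B : Set (Set X), #B ≤ κ ∧
      (∀ U ∈ B, IsOpen U ∧ x ∈ U) ∧ ∀ V : Set X, IsOpen V → x ∈ V → ∃ U ∈ B, U ⊆ V) :
    #X ≤ 2 ^ κ :=
  alas_general κ hκ hinit hwLc ht hψ
end
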